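/- There exists a map f : P(K) → J such that for every support L that is surely winning for player 2 and every initial distribution δ with support L, the belief strategy τ_f given by τ_f(ε) = f(L) (the Dirac distribution on the action f(L)) and τ_f(d₁,…,dₙ) = f(B₂(L,d₁,…,dₙ)) satisfies γ₁(δ,σ,τ_f) = 0 for every strategy σ of player 1. -/

import Mathlib

open scoped Classical

noncomputable section

/-- A probability distribution on a finite type, given by a nonnegative
real-valued density summing to `1`. -/
structure FDist (X : Type*) [Fintype X] where
  f : X → ℝ
  nonneg : ∀ x, 0 ≤ f x
  sum_one : ∑ x, f x = 1

/-- The support of a distribution: the set of points with positive probability. -/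
def FDist.support {X : Type*} [Fintype X] (δ : FDist X) : Finset X :=
  Finset.univ.filter fun x => 0 < δ.f x

/-- The uniform distribution on a nonempty finite set. -/
def uniform {X : Type*} [Fintype X] (L : Finset X) (hL : L.Nonempty) : FDist X where
  f x := if x ∈ L then (L.card : ℝ)⁻¹ else 0
  nonneg x := by split_ifs <;> positivity
  sum_one := by
    rw [Finset.sum_ite_mem, Finset.univ_inter, Finset.sum_const, nsmul_eq_mul,
      mul_inv_cancel₀]
    exact_mod_cast (Finset.card_pos.mpr hL).ne'

/-- Uniform distribution on `L`, defaulting to the uniform distribution on the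
whole type when `L` is empty. -/
def uniformD {X : Type*} [Fintype X] [Nonempty X] (L : Finset X) : FDist X :=
  if h : L.Nonempty then uniform L h else uniform Finset.univ Finset.univ_nonempty

/-- The Dirac distribution on a point. -/
def dirac {X : Type*} [Fintype X] (x : X) : FDist X where
  f y := if y = x then 1 else 0
  nonneg y := by by_cases h : y = x <;> simp [h]
  sum_one := by simp

/-- A stochastic game with partial observation on both sides and a reachability
objective for player 1: states `K`, actions `I`, `J`, signals `C`, `D`, target
states `T`, transition probabilities `p`, and actions encoded in signals via
`act₁`, `act₂`. -/
structure Game (K I J C D : Type*) [Fintype K] [Fintype I] [Fintype J] [Fintype C] [Fintype D] where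
  T : Finset K
  p : K → I → J → C × D × K → ℝ
  p_nonneg : ∀ k i j x, 0 ≤ p k i j x
  p_sum : ∀ k i j, ∑ x : C × D × K, p k i j x = 1
  act₁ : C → I
  act₂ : D → J
  act_compat : ∀ k i j c d l, 0 < p k i j (c, d, l) → i = act₁ c ∧ j = act₂ d

/-- A (behavioral) strategy of player 1: a distribution on actions for each
finite sequence of received signals. -/
abbrev Strategy1 (I C : Type*) [Fintype I] : Type _ := List C → FDist I

/-- A (behavioral) strategy of player 2. -/
abbrev Strategy2 (J D : Type*) [Fintype J] : Type _ := List D → FDist J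

/-- A play with `n+1` states: the initial state followed by `n` steps, each
consisting of a signal for player 1, a signal for player 2 and the next state. -/
structure Hist (K C D : Type*) (n : ℕ) where
  first : K
  steps : Fin n → C × D × K

instance (K C D : Type*) [Fintype K] [Fintype C] [Fintype D] (n : ℕ) :
    Fintype (Hist K C D n) :=
  Fintype.ofEquiv (K × (Fin n → C × D × K))
    { toFun := fun x => ⟨x.1, x.2⟩
      invFun := fun h => (h.first, h.steps)
      left_inv := fun _ => rfl
      right_inv := fun _ => rfl }

namespace Hist

variable {K C D : Type*}

/-- The last state of a play. -/
def last : ∀ {n : ℕ}, Hist K C D n → K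
  | 0, h => h.first
  | n + 1, h => (h.steps (Fin.last n)).2.2

/-- The play obtained by removing the last step. -/
def init {n : ℕ} (h : Hist K C D (n + 1)) : Hist K C D n :=
  ⟨h.first, fun m => h.steps m.castSucc⟩

/-- The `m`-th state of a play, `0`-indexed: `state h 0` is the initial state
(called `k₁` in `1`-indexed notation). -/
def state {n : ℕ} (h : Hist K C D n) (m : Fin (n + 1)) : K :=
  if hm : m.val = 0 then h.first
  else (h.steps ⟨m.val - 1, by have := m.isLt; omega⟩).2.2

/-- The sequence of signals received by player 1 along the play. -/
def sig1 {n : ℕ} (h : Hist K C D n) : List C := List.ofFn fun m => (h.steps m).1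

/-- The sequence of signals received by player 2 along the play. -/
def sig2 {n : ℕ} (h : Hist K C D n) : List D := List.ofFn fun m => (h.steps m).2.1

/-- The play visits the target set `T`. -/
def visits (T : Finset K) {n : ℕ} (h : Hist K C D n) : Prop :=
  ∃ m : Fin (n + 1), h.state m ∈ T

end Hist

namespace Game

variable {K I J C D : Type*} [Fintype K] [Fintype I] [Fintype J] [Fintype C] [Fintype D]

/-- The probability of a given play of `n` steps, under initial distribution `δ`
and strategies `σ`, `τ`. -/
def playProb (G : Game K I J C D) (δ : FDist K) (σ : Strategy1 I C) (τ : Strategy2 J D) :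
    ∀ n : ℕ, Hist K C D n → ℝ
  | 0, h => δ.f h.first
  | n + 1, h =>
      G.playProb δ σ τ n h.init *
        ∑ i : I, ∑ j : J,
          (σ h.init.sig1).f i * (τ h.init.sig2).f j *
            G.p h.init.last i j (h.steps (Fin.last n))

/-- The probability that a play with `n+1` states visits the target set. -/
def reachProb (G : Game K I J C D) (δ : FDist K) (σ : Strategy1 I C)
    (τ : Strategy2 J D) (n : ℕ) : ℝ :=
  ∑ h : Hist K C D n, if h.visits G.T then G.playProb δ σ τ n h else 0

/-- The reachability probability `γ₁(δ,σ,τ)`: the supremum over horizons of the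
probability that the play visits the target set. -/
def val (G : Game K I J C D) (δ : FDist K) (σ : Strategy1 I C) (τ : Strategy2 J D) : ℝ :=
  ⨆ n : ℕ, G.reachProb δ σ τ n

/-- `δ` is almost-surely winning for player 1. -/
def AlmostSureWin1 (G : Game K I J C D) (δ : FDist K) : Prop :=
  ∃ σ, ∀ τ, G.val δ σ τ = 1

/-- `δ` is positively winning for player 1. -/
def PositiveWin1 (G : Game K I J C D) (δ : FDist K) : Prop :=
  ∃ σ, ∀ τ, 0 < G.val δ σ τ

/-- `δ` is positively winning for player 2. -/
def PositiveWin2 (G : Game K I J C D) (δ : FDist K) : Prop :=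
  ∃ τ, ∀ σ, G.val δ σ τ < 1

/-- `δ` is surely (equivalently here, almost-surely) winning for player 2. -/
def SureWin2 (G : Game K I J C D) (δ : FDist K) : Prop :=
  ∃ τ, ∀ σ, G.val δ σ τ = 0

/-- One-step belief operator of player 1. -/
def B1 (G : Game K I J C D) (L : Finset K) (c : C) : Finset K :=
  Finset.univ.filter fun k => ∃ l ∈ L, ∃ d : D, 0 < G.p l (G.act₁ c) (G.act₂ d) (c, d, k)

/-- One-step belief operator of player 2. -/
def B2 (G : Game K I J C D) (L : Finset K) (d : D) : Finset K :=
  Finset.univ.filter fun k => ∃ l ∈ L, ∃ c : C, 0 < G.p l (G.act₁ c) (G.act₂ d) (c, d, k)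

/-- Belief of player 1 after a sequence of signals. -/
def B1seq (G : Game K I J C D) (L : Finset K) (cs : List C) : Finset K := cs.foldl G.B1 L

/-- Belief of player 2 after a sequence of signals. -/
def B2seq (G : Game K I J C D) (L : Finset K) (ds : List D) : Finset K := ds.foldl G.B2 L

/-- One-step pessimistic belief operator of player 1. -/
def B1p (G : Game K I J C D) (L : Finset K) (c : C) : Finset K := G.B1 (L \ G.T) c

/-- One-step pessimistic belief operator of player 2. -/
def B2p (G : Game K I J C D) (L : Finset K) (d : D) : Finset K := G.B2 (L \ G.T) d

/-- Pessimistic belief of player 1 after a sequence of signals. -/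
def B1pseq (G : Game K I J C D) (L : Finset K) (cs : List C) : Finset K := cs.foldl G.B1p L

/-- Pessimistic belief of player 2 after a sequence of signals. -/
def B2pseq (G : Game K I J C D) (L : Finset K) (ds : List D) : Finset K := ds.foldl G.B2p L

/-- The operator `Φ` on collections of subsets of `K ∖ T`. -/
def Phi (G : Game K I J C D) (𝓛 : Set (Finset K)) : Set (Finset K) :=
  {L | L ∈ 𝓛 ∧ L ∩ G.T = ∅ ∧ ∃ j : J, ∀ d : D, G.act₂ d = j → G.B2 L d ∈ 𝓛}

theorem Phi_mono (G : Game K I J C D) : Monotone G.Phi := by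
  intro A B hAB L hL
  obtain ⟨h1, h2, j, hj⟩ := hL
  exact ⟨hAB h1, h2, j, fun d hd => hAB (hj d hd)⟩

/-- `𝓛_∞`, the greatest fixpoint of `Φ`. -/
def Linf (G : Game K I J C D) : Set (Finset K) :=
  OrderHom.gfp ⟨G.Phi, G.Phi_mono⟩

/-- The winning condition of the `𝓛`-game for player 1, on a play with initial
support `L`: some state `k_m` is a target state and all earlier pessimistic
beliefs of player 1 avoid `𝓛`. -/
def LWin (G : Game K I J C D) (𝓛 : Set (Finset K)) (L : Finset K) {n : ℕ}
    (h : Hist K C D n) : Prop :=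
  ∃ m : Fin (n + 1), h.state m ∈ G.T ∧
    ∀ r : ℕ, 1 ≤ r → r ≤ m.val → G.B1pseq L (h.sig1.take r) ∉ 𝓛

/-- The payoff `γ₁^𝓛(δ,σ,τ)` of player 1 in the `𝓛`-game, for an initial
distribution `δ` with support `L`. -/
def Lval (G : Game K I J C D) (𝓛 : Set (Finset K)) (L : Finset K) (δ : FDist K)
    (σ : Strategy1 I C) (τ : Strategy2 J D) : ℝ :=
  ⨆ n : ℕ, ∑ h : Hist K C D n, if G.LWin 𝓛 L h then G.playProb δ σ τ n h else 0

end Game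

/-- The uniformly random strategy `σ_R` of player 1. -/
def randomStrat (I C : Type*) [Fintype I] [Nonempty I] : Strategy1 I C :=
  fun _ => uniform Finset.univ Finset.univ_nonempty

/-!
A support `L` is surely safe if some strategy `τ` of player 2 keeps out of `T` every play that
starts in `L` and whose steps all have positive probability under `τ` for some action of player 1.
Against the uniformly random strategy of player 1 each such play has positive probability, so a
surely winning support is surely safe. If `τ` is safe from `L` and plays `j` with positive
probability at the first step, then after any signal `d` announcing `j` the continuation of `τ` is
safe from the belief `B₂(L,d)`. Hence every surely safe `L` has an action `f(L)` all of whose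
successor beliefs are surely safe, and along any play of the belief strategy `τ_f` the current
belief stays surely safe and contains the current state, which is therefore never in `T`.
-/

namespace Hist

variable {K C D : Type*} {n : ℕ}

theorem ext' {h g : Hist K C D n} (hfirst : h.first = g.first)
    (hsteps : h.steps = g.steps) : h = g := by
  cases h; cases g; cases hfirst; cases hsteps; rfl

def snoc (h : Hist K C D n) (x : C × D × K) : Hist K C D (n + 1) :=
  ⟨h.first, Fin.snoc h.steps x⟩

@[simp] theorem init_snoc (h : Hist K C D n) (x : C × D × K) : (h.snoc x).init = h :=
  ext' rfl (funext fun m => by simp [snoc, init])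

@[simp] theorem snoc_steps_last (h : Hist K C D n) (x : C × D × K) :
    (h.snoc x).steps (Fin.last n) = x := by
  simp [snoc]

def snocEquiv (n : ℕ) : Hist K C D (n + 1) ≃ Hist K C D n × (C × D × K) where
  toFun h := (h.init, h.steps (Fin.last n))
  invFun p := p.1.snoc p.2
  left_inv h := ext' rfl <| funext fun m => by
    induction m using Fin.lastCases <;> simp [snoc, init]
  right_inv := fun ⟨h, x⟩ => by simp

def zeroEquiv : Hist K C D 0 ≃ K where
  toFun h := h.first
  invFun k := ⟨k, Fin.elim0⟩
  left_inv _ := ext' rfl (funext fun m => m.elim0)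
  right_inv _ := rfl

/-- The play that starts at `k`, takes the step `x` and then follows `h`; it is a genuine play
when `h.first = x.2.2`. -/
def cons (k : K) (x : C × D × K) (h : Hist K C D n) : Hist K C D (n + 1) :=
  ⟨k, Fin.cons x h.steps⟩

@[simp] theorem cons_steps_succ (k : K) (x : C × D × K) (h : Hist K C D n) (m : Fin n) :
    (cons k x h).steps m.succ = h.steps m := by
  simp [cons]

theorem init_cons (k : K) (x : C × D × K) (h : Hist K C D (n + 1)) :
    (cons k x h).init = cons k x h.init := by
  refine ext' rfl (funext fun m => ?_)
  induction m using Fin.cases with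
  | zero => rfl
  | succ m => exact (cons_steps_succ k x h m.castSucc).symm ▸ rfl

@[simp] theorem sig2_cons (k : K) (x : C × D × K) (h : Hist K C D n) :
    (cons k x h).sig2 = x.2.1 :: h.sig2 := by
  simp [cons, sig2, List.ofFn_succ]

theorem cons_steps_last (k : K) (x : C × D × K) (h : Hist K C D (n + 1)) :
    (cons k x h).steps (Fin.last (n + 1)) = h.steps (Fin.last n) := by
  rw [← Fin.succ_last, cons_steps_succ]

theorem last_cons (k : K) (x : C × D × K) (h : Hist K C D n) (hfirst : h.first = x.2.2) :
    (cons k x h).last = h.last := by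
  cases n with
  | zero => exact hfirst.symm
  | succ n => exact congrArg (·.2.2) (cons_steps_last k x h)

theorem state_cons_succ (k : K) (x : C × D × K) (h : Hist K C D n)
    (hfirst : h.first = x.2.2) (m : Fin (n + 1)) : (cons k x h).state m.succ = h.state m := by
  obtain ⟨_ | m, hm⟩ := m
  · simp [state, cons, hfirst]
  · simp only [state, cons]
    exact congrArg (·.2.2) (Fin.cons_succ (α := fun _ => C × D × K) x h.steps ⟨m, by omega⟩)

theorem visits_cons (T : Finset K) (k : K) (x : C × D × K) (h : Hist K C D n)
    (hfirst : h.first = x.2.2) (hv : h.visits T) : (cons k x h).visits T := by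
  obtain ⟨m, hm⟩ := hv
  exact ⟨m.succ, by rwa [state_cons_succ k x h hfirst]⟩

@[simp] theorem sig2_zero (h : Hist K C D 0) : h.sig2 = [] := by
  simp [sig2]

theorem sig2_succ (h : Hist K C D (n + 1)) :
    h.sig2 = h.init.sig2 ++ [(h.steps (Fin.last n)).2.1] := by
  rw [sig2, List.ofFn_succ', List.concat_eq_append]
  rfl

theorem visits_zero_iff (T : Finset K) (h : Hist K C D 0) : h.visits T ↔ h.first ∈ T := by
  simp [visits, state]

theorem state_castSucc (h : Hist K C D (n + 1)) (m : Fin (n + 1)) :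
    h.state m.castSucc = h.init.state m := by
  obtain ⟨_ | m, hm⟩ := m <;> rfl

theorem state_last (h : Hist K C D (n + 1)) : h.state (Fin.last (n + 1)) = h.last := rfl

theorem visits_succ_iff (T : Finset K) (h : Hist K C D (n + 1)) :
    h.visits T ↔ h.init.visits T ∨ h.last ∈ T := by
  simp only [visits, Fin.exists_fin_succ', state_castSucc, state_last]

end Hist

theorem uniform_f_pos {X : Type*} [Fintype X] {L : Finset X} (hL : L.Nonempty) {x : X}
    (hx : x ∈ L) : 0 < (uniform L hL).f x := by
  simpa [uniform, hx] using hL.card_pos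

theorem dirac_f_pos_iff {X : Type*} [Fintype X] {x y : X} : 0 < (dirac x).f y ↔ y = x := by
  by_cases h : y = x <;> simp [dirac, h]

namespace Game

variable {K I J C D : Type*} [Fintype K] [Fintype I] [Fintype J] [Fintype C] [Fintype D]
  (G : Game K I J C D)

def transProb (μ : FDist I) (ν : FDist J) (k : K) (x : C × D × K) : ℝ :=
  ∑ i, ∑ j, μ.f i * ν.f j * G.p k i j x

theorem playProb_succ (δ : FDist K) (σ : Strategy1 I C) (τ : Strategy2 J D) {n : ℕ}
    (h : Hist K C D (n + 1)) :
    G.playProb δ σ τ (n + 1) h = G.playProb δ σ τ n h.init *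
      G.transProb (σ h.init.sig1) (τ h.init.sig2) h.init.last (h.steps (Fin.last n)) :=
  rfl

theorem transProb_nonneg (μ : FDist I) (ν : FDist J) (k : K) (x : C × D × K) :
    0 ≤ G.transProb μ ν k x :=
  Finset.sum_nonneg fun _ _ => Finset.sum_nonneg fun _ _ =>
    mul_nonneg (mul_nonneg (μ.nonneg _) (ν.nonneg _)) (G.p_nonneg _ _ _ _)

theorem sum_transProb (μ : FDist I) (ν : FDist J) (k : K) :
    ∑ x, G.transProb μ ν k x = 1 := by
  calc ∑ x, G.transProb μ ν k x
      = ∑ i, μ.f i * ∑ j, ν.f j * ∑ x, G.p k i j x := by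
        simp only [transProb, Finset.sum_comm (γ := C × D × K), Finset.mul_sum, mul_assoc]
    _ = 1 := by simp [G.p_sum, ν.sum_one, μ.sum_one]

/-- `x` can follow `k` when player 2 plays `ν`, for a suitable action of player 1 (the one
announced by the signal `x.1`). -/
def CanStep (ν : FDist J) (k : K) (x : C × D × K) : Prop :=
  0 < ν.f (G.act₂ x.2.1) ∧ 0 < G.p k (G.act₁ x.1) (G.act₂ x.2.1) x

theorem canStep_of_transProb_pos {μ : FDist I} {ν : FDist J} {k : K} {x : C × D × K}
    (hx : 0 < G.transProb μ ν k x) : G.CanStep ν k x := by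
  obtain ⟨i, -, hi⟩ :=
    Finset.exists_lt_of_sum_lt (f := fun _ => (0 : ℝ)) (by simpa [transProb] using hx)
  obtain ⟨j, -, hij⟩ := Finset.exists_lt_of_sum_lt (f := fun _ => (0 : ℝ)) (by simpa using hi)
  have hp : 0 < G.p k i j x := pos_of_mul_pos_right hij (mul_nonneg (μ.nonneg _) (ν.nonneg _))
  have hν : 0 < ν.f j :=
    pos_of_mul_pos_right (pos_of_mul_pos_left hij (G.p_nonneg _ _ _ _)) (μ.nonneg _)
  obtain ⟨rfl, rfl⟩ := G.act_compat k i j x.1 x.2.1 x.2.2 hp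
  exact ⟨hν, hp⟩

theorem transProb_pos {μ : FDist I} {ν : FDist J} {k : K} {x : C × D × K}
    (hμ : ∀ i, 0 < μ.f i) (hx : G.CanStep ν k x) : 0 < G.transProb μ ν k x := by
  have hnonneg : ∀ i j, 0 ≤ μ.f i * ν.f j * G.p k i j x := fun i j =>
    mul_nonneg (mul_nonneg (μ.nonneg _) (ν.nonneg _)) (G.p_nonneg _ _ _ _)
  refine Finset.sum_pos' (fun i _ => Finset.sum_nonneg fun j _ => hnonneg i j)
    ⟨G.act₁ x.1, Finset.mem_univ _, Finset.sum_pos' (fun j _ => hnonneg _ j) ?_⟩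
  exact ⟨G.act₂ x.2.1, Finset.mem_univ _, mul_pos (mul_pos (hμ _) hx.1) hx.2⟩

theorem playProb_nonneg (δ : FDist K) (σ : Strategy1 I C) (τ : Strategy2 J D) :
    ∀ {n : ℕ} (h : Hist K C D n), 0 ≤ G.playProb δ σ τ n h
  | 0, h => δ.nonneg h.first
  | _ + 1, h => mul_nonneg (playProb_nonneg δ σ τ h.init) (G.transProb_nonneg _ _ _ _)

theorem sum_playProb (δ : FDist K) (σ : Strategy1 I C) (τ : Strategy2 J D) :
    ∀ n : ℕ, ∑ h : Hist K C D n, G.playProb δ σ τ n h = 1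
  | 0 => by rw [← Hist.zeroEquiv.symm.sum_comp]; exact δ.sum_one
  | n + 1 => by
    rw [← (Hist.snocEquiv n).symm.sum_comp, Fintype.sum_prod_type]
    simp only [Hist.snocEquiv, Equiv.coe_fn_symm_mk, playProb_succ, Hist.init_snoc,
      Hist.snoc_steps_last, ← Finset.mul_sum, sum_transProb, mul_one]
    exact sum_playProb δ σ τ n

theorem reachProb_le_val (δ : FDist K) (σ : Strategy1 I C) (τ : Strategy2 J D) (n : ℕ) :
    G.reachProb δ σ τ n ≤ G.val δ σ τ := by
  refine le_ciSup ⟨1, ?_⟩ n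
  rintro _ ⟨m, rfl⟩
  rw [reachProb, ← G.sum_playProb δ σ τ m]
  exact Finset.sum_le_sum fun h _ => by
    split_ifs
    exacts [le_rfl, G.playProb_nonneg δ σ τ h]

theorem playProb_le_reachProb (δ : FDist K) (σ : Strategy1 I C) (τ : Strategy2 J D)
    {n : ℕ} {h : Hist K C D n} (hv : h.visits G.T) :
    G.playProb δ σ τ n h ≤ G.reachProb δ σ τ n := by
  have hle := Finset.single_le_sum
    (f := fun g => if g.visits G.T then G.playProb δ σ τ n g else 0) (fun g _ => ?_)
    (Finset.mem_univ h)
  · simpa [reachProb, hv] using hle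
  · split_ifs
    exacts [G.playProb_nonneg δ σ τ g, le_rfl]

theorem val_eq_zero_iff {δ : FDist K} {σ : Strategy1 I C} {τ : Strategy2 J D} :
    G.val δ σ τ = 0 ↔
      ∀ n (h : Hist K C D n), 0 < G.playProb δ σ τ n h → ¬ h.visits G.T := by
  refine ⟨fun hval n h hp hv => ?_, fun hsafe => ?_⟩
  · have := (G.playProb_le_reachProb δ σ τ hv).trans (G.reachProb_le_val δ σ τ n)
    linarith
  · have hreach : ∀ n, G.reachProb δ σ τ n = 0 := fun n =>
      Finset.sum_eq_zero fun h _ => by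
        split_ifs with hv
        · exact ((G.playProb_nonneg δ σ τ h).eq_or_lt.resolve_right (hsafe n h · hv)).symm
        · rfl
    simp [val, hreach]

def Consistent (τ : Strategy2 J D) (L : Finset K) : ∀ {n : ℕ}, Hist K C D n → Prop
  | 0, h => h.first ∈ L
  | n + 1, h =>
      Consistent τ L h.init ∧ G.CanStep (τ h.init.sig2) h.init.last (h.steps (Fin.last n))

theorem Consistent.first_mem {τ : Strategy2 J D} {L : Finset K} :
    ∀ {n : ℕ} {h : Hist K C D n}, G.Consistent τ L h → h.first ∈ L
  | 0, _, hh => hh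
  | _ + 1, h, hh => Consistent.first_mem (h := h.init) hh.1

theorem consistent_of_playProb_pos {δ : FDist K} {σ : Strategy1 I C} {τ : Strategy2 J D} :
    ∀ {n : ℕ} {h : Hist K C D n}, 0 < G.playProb δ σ τ n h → G.Consistent τ δ.support h
  | 0, _, hp => Finset.mem_filter.2 ⟨Finset.mem_univ _, hp⟩
  | _ + 1, h, hp => by
    rw [playProb_succ] at hp
    exact ⟨consistent_of_playProb_pos (pos_of_mul_pos_left hp (G.transProb_nonneg _ _ _ _)),
      G.canStep_of_transProb_pos (pos_of_mul_pos_right hp (G.playProb_nonneg _ _ _ h.init))⟩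

theorem playProb_pos_of_consistent [Nonempty I] {τ : Strategy2 J D} {L : Finset K}
    (hL : L.Nonempty) :
    ∀ {n : ℕ} {h : Hist K C D n}, G.Consistent τ L h →
      0 < G.playProb (uniform L hL) (randomStrat I C) τ n h
  | 0, _, hh => uniform_f_pos hL hh
  | _ + 1, _, hh => mul_pos (playProb_pos_of_consistent hL hh.1)
      (G.transProb_pos (fun _ => uniform_f_pos _ (Finset.mem_univ _)) hh.2)

theorem consistent_cons {τ : Strategy2 J D} {L M : Finset K} {k : K} {x : C × D × K}
    (hk : k ∈ L) (hx : G.CanStep (τ []) k x) :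
    ∀ {n : ℕ} {h : Hist K C D n}, h.first = x.2.2 →
      G.Consistent (fun ds => τ (x.2.1 :: ds)) M h → G.Consistent τ L (Hist.cons k x h)
  | 0, _, _, _ => ⟨hk, by rw [Hist.sig2_zero]; exact hx⟩
  | _ + 1, h, hfirst, hh => by
    refine ⟨?_, ?_⟩
    · rw [Hist.init_cons]
      exact consistent_cons hk hx hfirst hh.1
    · rw [Hist.init_cons, Hist.sig2_cons, Hist.last_cons _ _ h.init hfirst, Hist.cons_steps_last]
      exact hh.2

def Safe (τ : Strategy2 J D) (L : Finset K) : Prop :=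
  ∀ n (h : Hist K C D n), G.Consistent τ L h → ¬ h.visits G.T

def SurelySafe (L : Finset K) : Prop :=
  ∃ τ, G.Safe τ L

theorem surelySafe_of_sureWin2 [Nonempty I] {L : Finset K} (hL : L.Nonempty)
    (hwin : G.SureWin2 (uniform L hL)) : G.SurelySafe L := by
  obtain ⟨τ, hτ⟩ := hwin
  exact ⟨τ, fun n h hh =>
    G.val_eq_zero_iff.1 (hτ (randomStrat I C)) n h (G.playProb_pos_of_consistent hL hh)⟩

theorem val_eq_zero_of_safe {δ : FDist K} {τ : Strategy2 J D} (hτ : G.Safe τ δ.support)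
    (σ : Strategy1 I C) : G.val δ σ τ = 0 :=
  G.val_eq_zero_iff.2 fun n h hp => hτ n h (G.consistent_of_playProb_pos hp)

theorem SurelySafe.not_mem_target {L : Finset K} (hL : G.SurelySafe L) {k : K} (hk : k ∈ L) :
    k ∉ G.T := fun hkT =>
  hL.choose_spec 0 ⟨k, Fin.elim0⟩ hk ((Hist.visits_zero_iff _ _).2 hkT)

theorem mem_B2_of_canStep {L : Finset K} {ν : FDist J} {k : K} {x : C × D × K} (hk : k ∈ L)
    (hx : G.CanStep ν k x) : x.2.2 ∈ G.B2 L x.2.1 :=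
  Finset.mem_filter.2 ⟨Finset.mem_univ _, k, hk, x.1, hx.2⟩

theorem Safe.shift {τ : Strategy2 J D} {L : Finset K} (hτ : G.Safe τ L) {d : D}
    (hd : 0 < (τ []).f (G.act₂ d)) : G.Safe (fun ds => τ (d :: ds)) (G.B2 L d) := by
  intro n h hh hv
  obtain ⟨-, l, hl, c, hp⟩ := Finset.mem_filter.1 (hh.first_mem G)
  exact hτ (n + 1) (Hist.cons l (c, d, h.first) h) (G.consistent_cons hl ⟨hd, hp⟩ rfl hh)
    (Hist.visits_cons _ _ _ h rfl hv)

theorem SurelySafe.exists_action {L : Finset K} (hL : G.SurelySafe L) :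
    ∃ j, ∀ d, G.act₂ d = j → G.SurelySafe (G.B2 L d) := by
  obtain ⟨τ, hτ⟩ := hL
  obtain ⟨j, -, hj⟩ := Finset.exists_lt_of_sum_lt (s := Finset.univ) (f := fun _ => (0 : ℝ))
    (g := (τ []).f) (by simp [(τ []).sum_one])
  exact ⟨j, fun d hd => ⟨_, hτ.shift G (hd ▸ hj)⟩⟩

theorem exists_surelySafe_selector [Nonempty J] :
    ∃ f : Finset K → J,
      ∀ L, G.SurelySafe L → ∀ d, G.act₂ d = f L → G.SurelySafe (G.B2 L d) := by
  choose f hf using fun L =>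
    if hL : G.SurelySafe L then (hL.exists_action G).imp fun _ hj _ => hj
    else ⟨Classical.arbitrary J, fun hL' => absurd hL' hL⟩
  exact ⟨f, hf⟩

theorem B2seq_concat (L : Finset K) (ds : List D) (d : D) :
    G.B2seq L (ds ++ [d]) = G.B2 (G.B2seq L ds) d :=
  List.foldl_concat _ _ _ _

def beliefStrategy (f : Finset K → J) (L : Finset K) : Strategy2 J D :=
  fun ds => dirac (f (G.B2seq L ds))

theorem safe_beliefStrategy {f : Finset K → J}
    (hf : ∀ L, G.SurelySafe L → ∀ d, G.act₂ d = f L → G.SurelySafe (G.B2 L d))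
    {L : Finset K} (hL : G.SurelySafe L) : G.Safe (G.beliefStrategy f L) L := by
  suffices ∀ n (h : Hist K C D n), G.Consistent (G.beliefStrategy f L) L h →
      G.SurelySafe (G.B2seq L h.sig2) ∧ h.last ∈ G.B2seq L h.sig2 ∧ ¬ h.visits G.T from
    fun n h hh => (this n h hh).2.2
  intro n
  induction n with
  | zero =>
    intro h hh
    rw [Hist.sig2_zero, Hist.visits_zero_iff]
    exact ⟨hL, hh, hL.not_mem_target G hh⟩
  | succ n ih =>
    intro h ⟨hh, hstep⟩
    obtain ⟨hsafe, hlast, hv⟩ := ih h.init hh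
    have hB : G.B2seq L h.sig2 = G.B2 (G.B2seq L h.init.sig2) (h.steps (Fin.last n)).2.1 := by
      rw [h.sig2_succ, B2seq_concat]
    have hsafe' : G.SurelySafe (G.B2seq L h.sig2) :=
      hB ▸ hf _ hsafe _ (dirac_f_pos_iff.1 hstep.1)
    have hlast' : h.last ∈ G.B2seq L h.sig2 := hB ▸ G.mem_B2_of_canStep hlast hstep
    refine ⟨hsafe', hlast', fun hv' => ?_⟩
    exact ((Hist.visits_succ_iff _ h).1 hv').elim hv (hsafe'.not_mem_target G hlast')

end Game

variable {K I J C D : Type*} [Fintype K] [Fintype I] [Fintype J] [Fintype C] [Fintype D]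
  [Nonempty K] [Nonempty I] [Nonempty J] [Nonempty C] [Nonempty D]

/-- there is a map `f : P(K) → J` such that the induced belief
strategy of player 2 is surely winning from every surely winning support. -/
theorem belief_strategy_surely_wins (G : Game K I J C D) :
    ∃ f : Finset K → J,
      ∀ (L : Finset K) (hL : L.Nonempty),
        G.SureWin2 (uniform L hL) →
        ∀ δ : FDist K, δ.support = L →
          ∀ σ : Strategy1 I C,
            G.val δ σ (fun ds => dirac (f (G.B2seq L ds))) = 0 := by
  obtain ⟨f, hf⟩ := G.exists_surelySafe_selector
  refine ⟨f, fun L hL hwin δ hδ σ => ?_⟩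
  subst hδ
  exact G.val_eq_zero_of_safe (G.safe_beliefStrategy hf (G.surelySafe_of_sureWin2 hL hwin)) σ
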